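/- Let X₁, …, Xₙ be random d×d real symmetric matrices with square-integrable entries, common mean E[Xᵢ] = M, and variance bounds Var(Xᵢ) = E[(Xᵢ − M)²] ⪯ V for all i, such that E[ (Xᵢ − M)(Xⱼ − M) + (Xⱼ − M)(Xᵢ − M) ] = 0 for all i ≠ j. Let U be a trace super-uniform random d×d positive semidefinite matrix independent of (X₁,…,Xₙ), and let A be a d×d symmetric positive definite matrix. Then for the sample mean X̄ₙ = (X₁ + ⋯ + Xₙ)/n, P( abs(X̄ₙ − M) ⋠ (A U A)^{1/2} ) ≤ n⁻¹ tr( V · A⁻² ). -/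

import Mathlib

/-!
Write `S = X̄ₙ - M` and `W = A⁻¹ S² A⁻¹`. If `W ⪯ U` then `S² ⪯ A U A`, and since the square root
is operator monotone, `abs S ⪯ (A U A)^{1/2}`; so the event in question lies in `{W ⋠ U}`. As `U`
is trace super-uniform and independent of the data, `P(W ⋠ U) ≤ E[tr W]` (a randomized Markov
inequality), and `E[tr W] = tr(E[S²] A⁻²)`. The vanishing expected anticommutators kill the cross
terms of `E[S²]`, leaving `E[S²] ⪯ V / n`.
-/

open MeasureTheory ProbabilityTheory Matrix Filter

noncomputable section

/-- Measurable space structure on matrices (entrywise). -/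
instance matMS (d : ℕ) : MeasurableSpace (Matrix (Fin d) (Fin d) ℝ) :=
  inferInstanceAs (MeasurableSpace (Fin d → Fin d → ℝ))

/-- Loewner order: `A ⪯ B` iff `B - A` is positive semidefinite. -/
def LoewnerLE {d : ℕ} (A B : Matrix (Fin d) (Fin d) ℝ) : Prop := (B - A).PosSemidef

/-- Entrywise expectation of a random matrix. -/
def matExpect {Ω : Type*} {_ : MeasurableSpace Ω} {d : ℕ} (μ : Measure Ω)
    (X : Ω → Matrix (Fin d) (Fin d) ℝ) : Matrix (Fin d) (Fin d) ℝ :=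
  Matrix.of fun i j => ∫ ω, X ω i j ∂μ

/-- Entrywise conditional expectation of a random matrix. -/
def matCondExp {Ω : Type*} {m0 : MeasurableSpace Ω} {d : ℕ} (μ : Measure Ω)
    (m : MeasurableSpace Ω) (X : Ω → Matrix (Fin d) (Fin d) ℝ) : Ω → Matrix (Fin d) (Fin d) ℝ :=
  fun ω => Matrix.of fun i j => (μ[fun ω' => X ω' i j | m]) ω

/-- Spectral functional calculus for real symmetric matrices: apply `f` to the eigenvalues. -/
def matCFC {d : ℕ} (f : ℝ → ℝ) (X : Matrix (Fin d) (Fin d) ℝ) : Matrix (Fin d) (Fin d) ℝ :=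
  if hX : X.IsHermitian then
    (hX.eigenvectorUnitary : Matrix (Fin d) (Fin d) ℝ) *
      Matrix.diagonal (fun i => f (hX.eigenvalues i)) *
      star (hX.eigenvectorUnitary : Matrix (Fin d) (Fin d) ℝ)
  else 0

/-- Positive semidefinite square root (via the spectral calculus). -/
def matSqrt {d : ℕ} (X : Matrix (Fin d) (Fin d) ℝ) : Matrix (Fin d) (Fin d) ℝ :=
  matCFC Real.sqrt X

/-- Matrix absolute value of a symmetric matrix. -/
def matAbs {d : ℕ} (X : Matrix (Fin d) (Fin d) ℝ) : Matrix (Fin d) (Fin d) ℝ :=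
  matCFC (fun x => |x|) X

/-- Real power of a symmetric (positive (semi)definite) matrix. -/
def matRPow {d : ℕ} (p : ℝ) (X : Matrix (Fin d) (Fin d) ℝ) : Matrix (Fin d) (Fin d) ℝ :=
  matCFC (fun x => x ^ p) X

/-- Matrix logarithm of a positive definite matrix. -/
def matLog {d : ℕ} (X : Matrix (Fin d) (Fin d) ℝ) : Matrix (Fin d) (Fin d) ℝ :=
  matCFC Real.log X

/-- Matrix exponential. -/
def matExpMat {d : ℕ} (X : Matrix (Fin d) (Fin d) ℝ) : Matrix (Fin d) (Fin d) ℝ :=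
  NormedSpace.exp X

/-- Largest eigenvalue of a symmetric matrix. -/
def lamMax {d : ℕ} (X : Matrix (Fin d) (Fin d) ℝ) : ℝ :=
  if hX : X.IsHermitian then ⨆ i, hX.eigenvalues i else 0

/-- Operator (spectral) norm: the largest absolute value of an eigenvalue. -/
def specNorm {d : ℕ} (X : Matrix (Fin d) (Fin d) ℝ) : ℝ :=
  if hX : X.IsHermitian then ⨆ i, |hX.eigenvalues i| else 0

/-- A random positive semidefinite matrix `U` is trace super-uniform if
`P(U ⋡ Y) ≤ tr Y` for every positive semidefinite `Y`. -/
def TraceSuperUniform {Ω : Type*} {_ : MeasurableSpace Ω} {d : ℕ} (μ : Measure Ω)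
    (U : Ω → Matrix (Fin d) (Fin d) ℝ) : Prop :=
  ∀ Y : Matrix (Fin d) (Fin d) ℝ, Y.PosSemidef →
    μ {ω | ¬ LoewnerLE Y (U ω)} ≤ ENNReal.ofReal Y.trace

/-- Matrix supermartingale: adapted, symmetric, entrywise integrable, and
`E(Y (n+1) | ℱ n) ⪯ Y n` a.s. for every `n`. -/
def IsMatrixSupermartingale {Ω : Type*} {m0 : MeasurableSpace Ω} {d : ℕ}
    (ℱ : Filtration ℕ m0) (μ : Measure Ω) (Y : ℕ → Ω → Matrix (Fin d) (Fin d) ℝ) : Prop :=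
  (∀ n ω, (Y n ω).IsHermitian) ∧
  (∀ n i j, StronglyMeasurable[ℱ n] fun ω => Y n ω i j) ∧
  (∀ n i j, Integrable (fun ω => Y n ω i j) μ) ∧
  (∀ n, ∀ᵐ ω ∂μ, LoewnerLE (matCondExp μ (ℱ n) (Y (n + 1)) ω) (Y n ω))

/-- Matrix submartingale: adapted, symmetric, entrywise integrable, and
`E(Y (n+1) | ℱ n) ⪰ Y n` a.s. for every `n`. -/
def IsMatrixSubmartingale {Ω : Type*} {m0 : MeasurableSpace Ω} {d : ℕ}
    (ℱ : Filtration ℕ m0) (μ : Measure Ω) (Y : ℕ → Ω → Matrix (Fin d) (Fin d) ℝ) : Prop :=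
  (∀ n ω, (Y n ω).IsHermitian) ∧
  (∀ n i j, StronglyMeasurable[ℱ n] fun ω => Y n ω i j) ∧
  (∀ n i j, Integrable (fun ω => Y n ω i j) μ) ∧
  (∀ n, ∀ᵐ ω ∂μ, LoewnerLE (Y n ω) (matCondExp μ (ℱ n) (Y (n + 1)) ω))

/-- Exchangeability of a sequence of random matrices: any finitely supported permutation
of the indices leaves the joint law invariant. -/
def MatExchangeable {Ω : Type*} {_ : MeasurableSpace Ω} {d : ℕ} (μ : Measure Ω)
    (X : ℕ → Ω → Matrix (Fin d) (Fin d) ℝ) : Prop :=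
  ∀ σ : Equiv.Perm ℕ, {n | σ n ≠ n}.Finite →
    Measure.map (fun ω n => X (σ n) ω) μ = Measure.map (fun ω n => X n ω) μ

section LoewnerOrder

variable {d : ℕ} {P Q R B S T : Matrix (Fin d) (Fin d) ℝ}

lemma LoewnerLE.trans (hPQ : LoewnerLE P Q) (hQR : LoewnerLE Q R) : LoewnerLE P R := by
  simpa [LoewnerLE] using hQR.add hPQ

lemma LoewnerLE.posSemidef (hPQ : LoewnerLE P Q) (hP : P.PosSemidef) : Q.PosSemidef := by
  simpa using hPQ.add hP

lemma Matrix.PosSemidef.trace_mul_nonneg (hP : P.PosSemidef) (hQ : Q.PosSemidef) :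
    0 ≤ (P * Q).trace := by
  open scoped MatrixOrder in
  obtain ⟨C, rfl⟩ := CStarAlgebra.nonneg_iff_eq_star_mul_self.mp hP.nonneg
  rw [Matrix.mul_assoc, trace_mul_comm]
  exact (hQ.mul_mul_conjTranspose_same C).trace_nonneg

lemma LoewnerLE.trace_mul_le (hPQ : LoewnerLE P Q) (hB : B.PosSemidef) :
    (P * B).trace ≤ (Q * B).trace := by
  have := hPQ.trace_mul_nonneg hB
  rw [Matrix.sub_mul, trace_sub] at this
  linarith

lemma LoewnerLE.of_mul_self (hS : S.PosSemidef) (hT : T.PosSemidef)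
    (h : LoewnerLE (S * S) (T * T)) : LoewnerLE S T := by
  have hH : (T - S).IsHermitian := hT.1.sub hS.1
  refine hH.posSemidef_iff_eigenvalues_nonneg.mpr fun i => not_lt.mp fun hc => ?_
  rw [Pi.zero_apply] at hc
  set c := hH.eigenvalues i
  set v : Fin d → ℝ := ⇑(hH.eigenvectorBasis i)
  have hv0 : v ≠ 0 := (WithLp.ofLp_eq_zero 2).not.mpr (hH.eigenvectorBasis.orthonormal.ne_zero i)
  have hv : (T - S) *ᵥ v = c • v := hH.mulVec_eigenvectorBasis i
  have hvl : v ᵥ* (T - S) = c • v := by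
    rw [← show (T - S)ᵀ = T - S from hH, vecMul_transpose, hv]
  -- `T² - S² = T (T - S) + (T - S) S`, so an eigenvalue `c < 0` of `T - S` would make
  -- `vᵀ (T² - S²) v = c (vᵀ T v + vᵀ S v)` negative unless `T v = S v = 0`.
  have hquad : 0 ≤ c * (v ⬝ᵥ T *ᵥ v + v ⬝ᵥ S *ᵥ v) := by
    have hT' : v ⬝ᵥ (T * (T - S)) *ᵥ v = c * (v ⬝ᵥ T *ᵥ v) := by
      rw [← mulVec_mulVec, hv, mulVec_smul, dotProduct_smul, smul_eq_mul]
    have hS' : v ⬝ᵥ ((T - S) * S) *ᵥ v = c * (v ⬝ᵥ S *ᵥ v) := by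
      rw [← mulVec_mulVec, dotProduct_mulVec, hvl, smul_dotProduct, smul_eq_mul]
    have := h.dotProduct_mulVec_nonneg v
    rwa [star_trivial, show T * T - S * S = T * (T - S) + (T - S) * S by noncomm_ring,
      add_mulVec, dotProduct_add, hT', hS', ← mul_add] at this
  have hTv := hT.dotProduct_mulVec_nonneg v
  have hSv := hS.dotProduct_mulVec_nonneg v
  rw [star_trivial] at hTv hSv
  have hsum : v ⬝ᵥ T *ᵥ v + v ⬝ᵥ S *ᵥ v ≤ 0 := by nlinarith
  have hT0 : T *ᵥ v = 0 := by
    rw [← hT.dotProduct_mulVec_zero_iff, star_trivial]; linarith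
  have hS0 : S *ᵥ v = 0 := by
    rw [← hS.dotProduct_mulVec_zero_iff, star_trivial]; linarith
  rw [sub_mulVec, hT0, hS0, sub_zero, eq_comm, smul_eq_zero] at hv
  exact hv.elim hc.ne hv0

end LoewnerOrder

section SpectralCalculus

variable {d : ℕ} {X : Matrix (Fin d) (Fin d) ℝ}

lemma matCFC_of_isHermitian (hX : X.IsHermitian) (f : ℝ → ℝ) :
    matCFC f X = (hX.eigenvectorUnitary : Matrix (Fin d) (Fin d) ℝ) *
      diagonal (fun i => f (hX.eigenvalues i)) *
      star (hX.eigenvectorUnitary : Matrix (Fin d) (Fin d) ℝ) :=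
  dif_pos hX

lemma matCFC_congr (hX : X.IsHermitian) {f g : ℝ → ℝ}
    (h : ∀ i, f (hX.eigenvalues i) = g (hX.eigenvalues i)) : matCFC f X = matCFC g X := by
  simp only [matCFC_of_isHermitian hX, h]

lemma matCFC_mul (hX : X.IsHermitian) (f g : ℝ → ℝ) :
    matCFC f X * matCFC g X = matCFC (fun x => f x * g x) X := by
  simp only [matCFC_of_isHermitian hX, mul_assoc]
  rw [← mul_assoc (star _) (hX.eigenvectorUnitary : Matrix (Fin d) (Fin d) ℝ),
    Unitary.coe_star_mul_self, one_mul, ← mul_assoc (diagonal _), diagonal_mul_diagonal]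

lemma matCFC_id (hX : X.IsHermitian) : matCFC id X = X :=
  (matCFC_of_isHermitian hX id).trans hX.spectral_theorem.symm

lemma matCFC_posSemidef (hX : X.IsHermitian) {f : ℝ → ℝ}
    (hf : ∀ i, 0 ≤ f (hX.eigenvalues i)) : (matCFC f X).PosSemidef := by
  rw [matCFC_of_isHermitian hX, star_eq_conjTranspose]
  exact (posSemidef_diagonal_iff.mpr hf).mul_mul_conjTranspose_same _

lemma matAbs_posSemidef (hX : X.IsHermitian) : (matAbs X).PosSemidef :=
  matCFC_posSemidef hX fun _ => abs_nonneg _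

lemma matAbs_mul_self (hX : X.IsHermitian) : matAbs X * matAbs X = X * X := by
  conv_rhs => rw [← matCFC_id hX]
  rw [matAbs, matCFC_mul hX, matCFC_mul hX]
  exact matCFC_congr hX fun _ => abs_mul_abs_self _

lemma matSqrt_posSemidef (hX : X.PosSemidef) : (matSqrt X).PosSemidef :=
  matCFC_posSemidef hX.1 fun _ => Real.sqrt_nonneg _

lemma matSqrt_mul_self (hX : X.PosSemidef) : matSqrt X * matSqrt X = X := by
  conv_rhs => rw [← matCFC_id hX.1]
  rw [matSqrt, matCFC_mul hX.1]
  exact matCFC_congr hX.1 fun i => Real.mul_self_sqrt (hX.eigenvalues_nonneg i)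

end SpectralCalculus

lemma loewnerLE_matAbs_matSqrt {d : ℕ} {S U A : Matrix (Fin d) (Fin d) ℝ} (hS : S.IsHermitian)
    (hA : A.PosDef) (h : LoewnerLE (A⁻¹ * (S * S) * A⁻¹) U) :
    LoewnerLE (matAbs S) (matSqrt (A * U * A)) := by
  have hdet : IsUnit A.det := hA.det_pos.ne'.isUnit
  have hconj : A * (A⁻¹ * (S * S) * A⁻¹) * A = S * S := by
    rw [Matrix.mul_assoc A, nonsing_inv_mul_cancel_right _ _ hdet,
      mul_nonsing_inv_cancel_left _ _ hdet]
  have hSS : LoewnerLE (S * S) (A * U * A) := by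
    have := h.mul_mul_conjTranspose_same A
    rwa [hA.1.eq, Matrix.mul_sub, Matrix.sub_mul, hconj] at this
  have hAUA : (A * U * A).PosSemidef := by
    refine hSS.posSemidef ?_
    simpa only [hS.eq] using posSemidef_conjTranspose_mul_self S
  refine LoewnerLE.of_mul_self (matAbs_posSemidef hS) (matSqrt_posSemidef hAUA) ?_
  rwa [matAbs_mul_self hS, matSqrt_mul_self hAUA]

section Measurability

variable {d : ℕ}

instance : BorelSpace (Matrix (Fin d) (Fin d) ℝ) :=
  inferInstanceAs (BorelSpace (Fin d → Fin d → ℝ))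

instance : SecondCountableTopology (Matrix (Fin d) (Fin d) ℝ) :=
  inferInstanceAs (SecondCountableTopology (Fin d → Fin d → ℝ))

lemma isClosed_setOf_posSemidef : IsClosed {P : Matrix (Fin d) (Fin d) ℝ | P.PosSemidef} := by
  simp_rw [posSemidef_iff_dotProduct_mulVec, Set.ofPred_and, Set.ofPred_forall]
  exact (isClosed_eq (by fun_prop) continuous_id).inter
    (isClosed_iInter fun x => isClosed_le continuous_const (by fun_prop))

lemma measurableSet_loewnerLE {α : Type*} [MeasurableSpace α] {f g : α → Matrix (Fin d) (Fin d) ℝ}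
    (hf : Measurable f) (hg : Measurable g) : MeasurableSet {a | LoewnerLE (f a) (g a)} :=
  isClosed_setOf_posSemidef.measurableSet.preimage (hg.sub hf)

lemma aemeasurable_of_apply {Ω : Type*} {m0 : MeasurableSpace Ω} {μ : Measure Ω}
    {Y : Ω → Matrix (Fin d) (Fin d) ℝ} (hY : ∀ k l, AEMeasurable (fun ω => Y ω k l) μ) :
    AEMeasurable Y μ :=
  aemeasurable_pi_lambda _ fun k => aemeasurable_pi_lambda _ (hY k)

end Measurability

section RationalApproximation

variable {d : ℕ}

lemma abs_dotProduct_mulVec_le {E : Matrix (Fin d) (Fin d) ℝ} {δ : ℝ} (hE : ∀ k l, |E k l| ≤ δ)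
    (v : Fin d → ℝ) : |v ⬝ᵥ E *ᵥ v| ≤ d * δ * (v ⬝ᵥ v) := by
  calc |v ⬝ᵥ E *ᵥ v| = |∑ k, ∑ l, v k * E k l * v l| := by
        simp only [dotProduct, mulVec, Finset.mul_sum, mul_assoc]
    _ ≤ ∑ k, ∑ l, δ * (v k ^ 2 + v l ^ 2) / 2 := by
        refine (Finset.abs_sum_le_sum_abs _ _).trans (Finset.sum_le_sum fun k _ =>
          (Finset.abs_sum_le_sum_abs _ _).trans (Finset.sum_le_sum fun l _ => ?_))
        rw [abs_mul, abs_mul]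
        nlinarith [abs_nonneg (E k l), hE k l, sq_nonneg (|v k| - |v l|), sq_abs (v k),
          sq_abs (v l)]
    _ = d * δ * (v ⬝ᵥ v) := by
        simp only [dotProduct, mul_add, add_div, Finset.sum_add_distrib, Finset.sum_const,
          Finset.card_univ, Fintype.card_fin, nsmul_eq_mul, ← Finset.sum_div, ← Finset.mul_sum]
        simp only [sq]
        ring

lemma posSemidef_smul_one_add_of_abs_apply_le {E : Matrix (Fin d) (Fin d) ℝ} (hE : E.IsHermitian)
    {δ : ℝ} (hδ : ∀ k l, |E k l| ≤ δ) :
    ((d * δ) • (1 : Matrix (Fin d) (Fin d) ℝ) + E).PosSemidef := by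
  refine .of_dotProduct_mulVec_nonneg ((isHermitian_one.smul (.all _)).add hE) fun v => ?_
  rw [star_trivial, add_mulVec, smul_mulVec, one_mulVec, dotProduct_add, dotProduct_smul,
    smul_eq_mul]
  linarith [neg_abs_le (v ⬝ᵥ E *ᵥ v), abs_dotProduct_mulVec_le hδ v]

end RationalApproximation

lemma exists_seq_loewnerLE_trace_le (d : ℕ) : ∃ Q : ℕ → Matrix (Fin d) (Fin d) ℝ,
    ∀ P : Matrix (Fin d) (Fin d) ℝ, P.IsHermitian → ∀ ε > 0,
      ∃ j, LoewnerLE P (Q j) ∧ (Q j).trace ≤ P.trace + ε := by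
  obtain ⟨e, he⟩ := exists_surjective_nat (Fin d → Fin d → ℚ)
  refine ⟨fun j => of fun k l => (e j k l : ℝ), fun P hP ε hε => ?_⟩
  -- Round `P + (d δ) • 1` entrywise to a symmetric rational matrix `Q`; the shift absorbs the
  -- rounding error in the Loewner order.
  set δ := ε / (d * d + d + 1)
  have hδ : 0 < δ := by positivity
  set P' := P + (d * δ) • (1 : Matrix (Fin d) (Fin d) ℝ)
  have hP' : P'.IsHermitian := hP.add (isHermitian_one.smul (.all _))
  choose q hq using fun k l => exists_rat_near (P' k l) hδ
  obtain ⟨j, hj⟩ := he fun k l => q (min k l) (max k l)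
  set Q : Matrix (Fin d) (Fin d) ℝ := of fun k l => (q (min k l) (max k l) : ℝ)
  have hQ : Q.IsHermitian := IsHermitian.ext fun k l => by simp [Q, min_comm, max_comm]
  have hP'_apply : ∀ k l, P' k l = P' (min k l) (max k l) := fun k l => by
    rcases le_total k l with h | h
    · rw [min_eq_left h, max_eq_right h]
    · rw [min_eq_right h, max_eq_left h, ← hP'.apply k l, star_trivial]
  have hE : ∀ k l, |(Q - P') k l| ≤ δ := fun k l => by
    rw [Matrix.sub_apply, hP'_apply, abs_sub_comm]
    exact (hq _ _).le
  refine ⟨j, ?_⟩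
  simp only [hj]
  refine ⟨?_, ?_⟩
  · have := posSemidef_smul_one_add_of_abs_apply_le (hQ.sub hP') hE
    rwa [show (d * δ) • (1 : Matrix (Fin d) (Fin d) ℝ) + (Q - P') = Q - P by
      simp only [P']; abel] at this
  · have htr : (Q - P').trace ≤ d * δ :=
      calc (Q - P').trace ≤ ∑ _k : Fin d, δ :=
            Finset.sum_le_sum fun k _ => (le_abs_self _).trans (hE k k)
        _ = d * δ := by simp
    have hε' : (d * d + d + 1) * δ = ε := by simp only [δ]; field_simp
    rw [trace_sub, trace_add, trace_smul, trace_one, Fintype.card_fin, smul_eq_mul] at htr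
    nlinarith [hδ.le]

lemma exists_partition_posSemidef_loewnerLE_trace_le (d : ℕ) {ε : ℝ} (hε : 0 < ε) :
    ∃ (Q : ℕ → Matrix (Fin d) (Fin d) ℝ) (G : ℕ → Set (Matrix (Fin d) (Fin d) ℝ)),
      (∀ j, MeasurableSet (G j)) ∧ Pairwise (Function.onFun Disjoint G) ∧
      (∀ j, ∀ x ∈ G j, x.PosSemidef ∧ LoewnerLE x (Q j) ∧ (Q j).trace ≤ x.trace + ε) ∧
      ∀ x : Matrix (Fin d) (Fin d) ℝ, x.PosSemidef → ∃ j, x ∈ G j := by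
  obtain ⟨Q, hQ⟩ := exists_seq_loewnerLE_trace_le d
  set C : ℕ → Set (Matrix (Fin d) (Fin d) ℝ) := fun j =>
    {x | x.PosSemidef ∧ LoewnerLE x (Q j) ∧ (Q j).trace ≤ x.trace + ε}
  have htrace : Measurable fun x : Matrix (Fin d) (Fin d) ℝ => x.trace :=
    continuous_id.matrix_trace.measurable
  have hCm : ∀ j, MeasurableSet (C j) := fun j =>
    isClosed_setOf_posSemidef.measurableSet.inter
      ((measurableSet_loewnerLE measurable_id measurable_const).inter
        (measurableSet_le measurable_const (htrace.add_const ε)))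
  refine ⟨Q, disjointed C, MeasurableSet.disjointed hCm, disjoint_disjointed C,
    fun j x hx => disjointed_subset C j hx, fun x hx => ?_⟩
  obtain ⟨j, hjQ, hjtr⟩ := hQ x hx.1 ε hε
  have hxC : x ∈ ⋃ j, disjointed C j := by
    rw [iUnion_disjointed]
    exact Set.mem_iUnion.mpr ⟨j, hx, hjQ, hjtr⟩
  exact Set.mem_iUnion.mp hxC

section RandomizedMarkov

variable {Ω : Type*} {m0 : MeasurableSpace Ω} {μ : Measure Ω} [IsProbabilityMeasure μ] {d : ℕ}
  {U W : Ω → Matrix (Fin d) (Fin d) ℝ}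

/-- `U` need not be measurable, so instead of conditioning on `W` we cut the range of `W` into
countably many cells, on each of which `W` is dominated by a fixed matrix `Q j` with
`tr (Q j) ≤ tr W + ε`, and apply trace super-uniformity to each `Q j`. -/
lemma TraceSuperUniform.measure_not_loewnerLE_le_lintegral_add (hU : TraceSuperUniform μ U)
    (hW : Measurable W) (hWpsd : ∀ᵐ ω ∂μ, (W ω).PosSemidef) (hWU : IndepFun W U μ) {ε : ℝ}
    (hε : 0 < ε) :
    μ {ω | ¬ LoewnerLE (W ω) (U ω)} ≤
      ∫⁻ ω, ENNReal.ofReal (W ω).trace ∂μ + ENNReal.ofReal ε := by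
  obtain ⟨Q, G, hGm, hGdisj, hGQ, hGcover⟩ := exists_partition_posSemidef_loewnerLE_trace_le d hε
  set T : ℕ → Set (Matrix (Fin d) (Fin d) ℝ) := fun j => {u | ¬ LoewnerLE (Q j) u}
  have hTm : ∀ j, MeasurableSet (T j) := fun j =>
    (measurableSet_loewnerLE measurable_const measurable_id).compl
  set f := fun ω => ENNReal.ofReal (W ω).trace + ENNReal.ofReal ε
  have hcover : {ω | ¬ LoewnerLE (W ω) (U ω)} ⊆
      {ω | ¬ (W ω).PosSemidef} ∪ ⋃ j, W ⁻¹' G j ∩ U ⁻¹' T j := by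
    intro ω hω
    by_cases hpsd : (W ω).PosSemidef
    · obtain ⟨j, hj⟩ := hGcover _ hpsd
      exact Or.inr <| Set.mem_iUnion.mpr ⟨j, hj, fun hQU => hω ((hGQ j _ hj).2.1.trans hQU)⟩
    · exact Or.inl hpsd
  have hcell : ∀ j, μ (W ⁻¹' G j ∩ U ⁻¹' T j) ≤ ∫⁻ ω in W ⁻¹' G j, f ω ∂μ := by
    intro j
    rcases (G j).eq_empty_or_nonempty with hGj | ⟨x, hx⟩
    · simp [hGj]
    have hQj : (Q j).PosSemidef := (hGQ j x hx).2.1.posSemidef (hGQ j x hx).1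
    calc μ (W ⁻¹' G j ∩ U ⁻¹' T j) = μ (W ⁻¹' G j) * μ (U ⁻¹' T j) :=
          hWU.measure_inter_preimage_eq_mul _ _ (hGm j) (hTm j)
      _ ≤ μ (W ⁻¹' G j) * ENNReal.ofReal (Q j).trace := by gcongr; exact hU _ hQj
      _ = ∫⁻ ω in W ⁻¹' G j, ENNReal.ofReal (Q j).trace ∂μ := by
          rw [setLIntegral_const, mul_comm]
      _ ≤ ∫⁻ ω in W ⁻¹' G j, f ω ∂μ := setLIntegral_mono' (hW (hGm j)) fun ω hω =>
          (ENNReal.ofReal_le_ofReal (hGQ j _ hω).2.2).trans ENNReal.ofReal_add_le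
  calc μ {ω | ¬ LoewnerLE (W ω) (U ω)}
      ≤ μ {ω | ¬ (W ω).PosSemidef} + μ (⋃ j, W ⁻¹' G j ∩ U ⁻¹' T j) :=
        (measure_mono hcover).trans (measure_union_le _ _)
    _ = μ (⋃ j, W ⁻¹' G j ∩ U ⁻¹' T j) := by rw [ae_iff.mp hWpsd, zero_add]
    _ ≤ ∑' j, ∫⁻ ω in W ⁻¹' G j, f ω ∂μ :=
        (measure_iUnion_le _).trans (ENNReal.tsum_le_tsum hcell)
    _ = ∫⁻ ω in ⋃ j, W ⁻¹' G j, f ω ∂μ :=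
        (lintegral_iUnion (fun j => hW (hGm j)) (hGdisj.mono fun _ _ h => h.preimage W) f).symm
    _ ≤ ∫⁻ ω, f ω ∂μ := setLIntegral_le_lintegral _ _
    _ = ∫⁻ ω, ENNReal.ofReal (W ω).trace ∂μ + ENNReal.ofReal ε := by
        rw [lintegral_add_right _ measurable_const, lintegral_const, measure_univ, mul_one]

theorem TraceSuperUniform.measure_not_loewnerLE_le_lintegral (hU : TraceSuperUniform μ U)
    (hW : AEMeasurable W μ) (hWpsd : ∀ᵐ ω ∂μ, (W ω).PosSemidef) (hWU : IndepFun W U μ) :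
    μ {ω | ¬ LoewnerLE (W ω) (U ω)} ≤ ∫⁻ ω, ENNReal.ofReal (W ω).trace ∂μ := by
  have hW' := hW.ae_eq_mk
  have hmk_psd : ∀ᵐ ω ∂μ, (hW.mk W ω).PosSemidef := by
    filter_upwards [hWpsd, hW'] with ω hω hω' using hω' ▸ hω
  refine ENNReal.le_of_forall_pos_le_add fun ε hε _ => ?_
  calc μ {ω | ¬ LoewnerLE (W ω) (U ω)} = μ {ω | ¬ LoewnerLE (hW.mk W ω) (U ω)} :=
        measure_congr <| eventuallyEq_set.mpr <| by
          filter_upwards [hW'] with ω hω using by rw [hω]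
    _ ≤ ∫⁻ ω, ENNReal.ofReal (hW.mk W ω).trace ∂μ + ENNReal.ofReal ε :=
        hU.measure_not_loewnerLE_le_lintegral_add hW.measurable_mk hmk_psd (hWU.congr hW' .rfl) hε
    _ = ∫⁻ ω, ENNReal.ofReal (W ω).trace ∂μ + ε := by
        rw [lintegral_congr_ae (by filter_upwards [hW'] with ω hω using by rw [← hω]),
          ENNReal.ofReal_coe_nnreal]

end RandomizedMarkov

lemma sum_sum_eq_sum_diag_of_add_swap_eq_zero {ι M : Type*} [Fintype ι] [AddCommGroup M]
    [Module ℚ M] (m : ι → ι → M) (h : ∀ i j, i ≠ j → m i j + m j i = 0) :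
    ∑ i, ∑ j, m i j = ∑ i, m i i := by
  have hdiag : ∀ i, ∑ j, (m i j + m j i) = m i i + m i i := fun i =>
    Finset.sum_eq_single i (fun j _ hji => h i j hji.symm) (by simp)
  have h2 : (2 : ℚ) • ∑ i, ∑ j, m i j = (2 : ℚ) • ∑ i, m i i := by
    rw [two_smul, two_smul]
    nth_rw 2 [Finset.sum_comm]
    simp only [← Finset.sum_add_distrib, hdiag]
  exact smul_right_injective M two_ne_zero h2

section Expectation

variable {Ω : Type*} {m0 : MeasurableSpace Ω} {μ : Measure Ω} {d : ℕ}
  {Y Z : Ω → Matrix (Fin d) (Fin d) ℝ}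

lemma matExpect_isHermitian (hY : ∀ ω, (Y ω).IsHermitian) : (matExpect μ Y).IsHermitian :=
  IsHermitian.ext fun k l => by
    simp only [matExpect, of_apply, star_trivial]
    exact integral_congr_ae (ae_of_all _ fun ω => by simpa using (hY ω).apply k l)

lemma matExpect_smul (c : ℝ) : matExpect μ (fun ω => c • Y ω) = c • matExpect μ Y := by
  ext k l
  simp [matExpect, integral_const_mul]

lemma matExpect_add (hY : ∀ k l, Integrable (fun ω => Y ω k l) μ)
    (hZ : ∀ k l, Integrable (fun ω => Z ω k l) μ) :
    matExpect μ (fun ω => Y ω + Z ω) = matExpect μ Y + matExpect μ Z := by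
  ext k l
  simp [matExpect, integral_add (hY k l) (hZ k l)]

lemma matExpect_sum {ι : Type*} (s : Finset ι) {Y : ι → Ω → Matrix (Fin d) (Fin d) ℝ}
    (hY : ∀ i ∈ s, ∀ k l, Integrable (fun ω => Y i ω k l) μ) :
    matExpect μ (fun ω => ∑ i ∈ s, Y i ω) = ∑ i ∈ s, matExpect μ (Y i) := by
  ext k l
  simp [matExpect, Matrix.sum_apply, integral_finsetSum s fun i hi => hY i hi k l]

lemma integrable_mul_apply (hY : ∀ k l, MemLp (fun ω => Y ω k l) 2 μ)
    (hZ : ∀ k l, MemLp (fun ω => Z ω k l) 2 μ) (k l : Fin d) :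
    Integrable (fun ω => (Y ω * Z ω) k l) μ := by
  simp only [mul_apply]
  exact integrable_finsetSum _ fun m _ => (hY k m).integrable_mul (hZ m l)

lemma integrable_trace_mul (hY : ∀ k l, Integrable (fun ω => Y ω k l) μ)
    (B : Matrix (Fin d) (Fin d) ℝ) : Integrable (fun ω => (Y ω * B).trace) μ := by
  simp only [trace, diag, mul_apply]
  exact integrable_finsetSum _ fun k _ => integrable_finsetSum _ fun l _ => (hY k l).mul_const _

lemma integral_trace_mul (hY : ∀ k l, Integrable (fun ω => Y ω k l) μ)
    (B : Matrix (Fin d) (Fin d) ℝ) : ∫ ω, (Y ω * B).trace ∂μ = (matExpect μ Y * B).trace := by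
  simp only [trace, diag, mul_apply, matExpect, of_apply]
  rw [integral_finsetSum _ fun k _ => integrable_finsetSum _ fun l _ => (hY k l).mul_const _]
  refine Finset.sum_congr rfl fun k _ => ?_
  rw [integral_finsetSum _ fun l _ => (hY k l).mul_const _]
  exact Finset.sum_congr rfl fun l _ => integral_mul_const _ _

variable {ι : Type*} [Fintype ι] {D : ι → Ω → Matrix (Fin d) (Fin d) ℝ}

lemma matExpect_sum_mul_sum (hD : ∀ i k l, MemLp (fun ω => D i ω k l) 2 μ)
    (hcross : ∀ i j, i ≠ j →
      matExpect μ (fun ω => D i ω * D j ω + D j ω * D i ω) = 0) :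
    matExpect μ (fun ω => (∑ i, D i ω) * ∑ i, D i ω) =
      ∑ i, matExpect μ (fun ω => D i ω * D i ω) := by
  have hint : ∀ i j k l, Integrable (fun ω => (D i ω * D j ω) k l) μ := fun i j =>
    integrable_mul_apply (hD i) (hD j)
  have hint_sum : ∀ i k l, Integrable (fun ω => (∑ j, D i ω * D j ω) k l) μ := fun i k l => by
    simpa only [Matrix.sum_apply] using integrable_finsetSum _ fun j _ => hint i j k l
  simp_rw [Finset.sum_mul_sum]
  rw [matExpect_sum _ fun i _ => hint_sum i,
    Finset.sum_congr rfl fun i _ => matExpect_sum _ fun j _ => hint i j]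
  refine sum_sum_eq_sum_diag_of_add_swap_eq_zero _ fun i j hij => ?_
  rw [← matExpect_add (hint i j) (hint j i), hcross i j hij]

lemma loewnerLE_matExpect_mean_mul_mean {V : Matrix (Fin d) (Fin d) ℝ}
    (hD : ∀ i k l, MemLp (fun ω => D i ω k l) 2 μ)
    (hV : ∀ i, LoewnerLE (matExpect μ (fun ω => D i ω * D i ω)) V)
    (hcross : ∀ i j, i ≠ j →
      matExpect μ (fun ω => D i ω * D j ω + D j ω * D i ω) = 0) :
    LoewnerLE (matExpect μ (fun ω =>
        ((Fintype.card ι : ℝ)⁻¹ • ∑ i, D i ω) * ((Fintype.card ι : ℝ)⁻¹ • ∑ i, D i ω)))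
      ((Fintype.card ι : ℝ)⁻¹ • V) := by
  set c : ℝ := (Fintype.card ι : ℝ)⁻¹
  simp_rw [smul_mul_smul_comm]
  rw [matExpect_smul, matExpect_sum_mul_sum hD hcross]
  have hV' : c • V = (c * c) • ∑ _i : ι, V := by
    rw [Finset.sum_const, Finset.card_univ, ← Nat.cast_smul_eq_nsmul ℝ, smul_smul, mul_assoc]
    rcases eq_or_ne (Fintype.card ι : ℝ) 0 with h | h
    · simp [c, h]
    · rw [inv_mul_cancel₀ h, mul_one]
  rw [LoewnerLE, hV', ← smul_sub, ← Finset.sum_sub_distrib]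
  exact (posSemidef_sum _ fun i _ => hV i).smul (mul_self_nonneg c)

end Expectation

lemma Matrix.PosDef.posSemidef_inv_mul_inv {d : ℕ} {A : Matrix (Fin d) (Fin d) ℝ}
    (hA : A.PosDef) : (A⁻¹ * A⁻¹).PosSemidef := by
  simpa only [hA.inv.1.eq] using posSemidef_conjTranspose_mul_self A⁻¹

theorem TraceSuperUniform.measure_not_loewnerLE_matAbs_le {Ω : Type*} {m0 : MeasurableSpace Ω}
    {μ : Measure Ω} [IsProbabilityMeasure μ] {d : ℕ} {S U : Ω → Matrix (Fin d) (Fin d) ℝ}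
    {A : Matrix (Fin d) (Fin d) ℝ} (hU : TraceSuperUniform μ U) (hS : ∀ ω, (S ω).IsHermitian)
    (hSL2 : ∀ k l, MemLp (fun ω => S ω k l) 2 μ) (hSU : IndepFun S U μ) (hA : A.PosDef) :
    μ {ω | ¬ LoewnerLE (matAbs (S ω)) (matSqrt (A * U ω * A))} ≤
      ENNReal.ofReal ((matExpect μ (fun ω => S ω * S ω) * (A⁻¹ * A⁻¹)).trace) := by
  have hφ : Measurable fun x : Matrix (Fin d) (Fin d) ℝ => A⁻¹ * (x * x) * A⁻¹ :=
    (by fun_prop : Continuous _).measurable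
  set W : Ω → Matrix (Fin d) (Fin d) ℝ := fun ω => A⁻¹ * (S ω * S ω) * A⁻¹
  have hW : AEMeasurable W μ :=
    hφ.comp_aemeasurable <| aemeasurable_of_apply fun k l =>
      (hSL2 k l).aestronglyMeasurable.aemeasurable
  have hW_psd : ∀ ω, (W ω).PosSemidef := fun ω => by
    simpa only [W, (hS ω).eq, hA.inv.1.eq] using
      (posSemidef_conjTranspose_mul_self (S ω)).conjTranspose_mul_mul_same A⁻¹
  have htrW : ∀ ω, (W ω).trace = (S ω * S ω * (A⁻¹ * A⁻¹)).trace := fun ω => by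
    rw [trace_mul_cycle, trace_mul_comm]
  have hSS : ∀ k l, Integrable (fun ω => (S ω * S ω) k l) μ := integrable_mul_apply hSL2 hSL2
  calc μ {ω | ¬ LoewnerLE (matAbs (S ω)) (matSqrt (A * U ω * A))}
      ≤ μ {ω | ¬ LoewnerLE (W ω) (U ω)} :=
        measure_mono fun ω hω h => hω (loewnerLE_matAbs_matSqrt (hS ω) hA h)
    _ ≤ ∫⁻ ω, ENNReal.ofReal (W ω).trace ∂μ :=
        hU.measure_not_loewnerLE_le_lintegral hW (ae_of_all _ hW_psd) (hSU.comp hφ measurable_id)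
    _ = ENNReal.ofReal (∫ ω, (W ω).trace ∂μ) :=
        (ofReal_integral_eq_lintegral_ofReal (by simpa only [htrW] using integrable_trace_mul hSS _)
          (ae_of_all _ fun ω => (hW_psd ω).trace_nonneg)).symm
    _ = _ := by simp only [htrW, integral_trace_mul hSS]

theorem stmt3_general {Ω : Type*} {m0 : MeasurableSpace Ω} (μ : Measure Ω) [IsProbabilityMeasure μ]
    {d n : ℕ} (hn : 0 < n)
    (X : Fin n → Ω → Matrix (Fin d) (Fin d) ℝ) (U : Ω → Matrix (Fin d) (Fin d) ℝ)
    (hsymm : ∀ i ω, (X i ω).IsHermitian)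
    (hL2 : ∀ i k l, MemLp (fun ω => X i ω k l) 2 μ)
    (M V : Matrix (Fin d) (Fin d) ℝ)
    (hM : ∀ i, matExpect μ (X i) = M)
    (hV : ∀ i, LoewnerLE (matExpect μ (fun ω => (X i ω - M) * (X i ω - M))) V)
    (hcross : ∀ i j, i ≠ j →
      matExpect μ (fun ω => (X i ω - M) * (X j ω - M) + (X j ω - M) * (X i ω - M)) = 0)
    (hU : TraceSuperUniform μ U)
    (hindep : IndepFun (fun ω (i : Fin n) => X i ω) U μ)
    (A : Matrix (Fin d) (Fin d) ℝ) (hA : A.PosDef) :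
    μ {ω | ¬ LoewnerLE (matAbs ((n : ℝ)⁻¹ • ∑ i, X i ω - M)) (matSqrt (A * U ω * A))} ≤
      ENNReal.ofReal ((V * (A⁻¹ * A⁻¹)).trace / n) := by
  have hM_herm : M.IsHermitian := hM ⟨0, hn⟩ ▸ matExpect_isHermitian (hsymm ⟨0, hn⟩)
  have hDL2 : ∀ i k l, MemLp (fun ω => (X i ω - M) k l) 2 μ := fun i k l =>
    (hL2 i k l).sub (memLp_const (M k l))
  set S : Ω → Matrix (Fin d) (Fin d) ℝ := fun ω => (n : ℝ)⁻¹ • ∑ i, (X i ω - M)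
  have hS : ∀ ω, (n : ℝ)⁻¹ • ∑ i, X i ω - M = S ω := fun ω => by
    simp only [S]
    rw [Finset.sum_sub_distrib, Finset.sum_const, Finset.card_univ, Fintype.card_fin, smul_sub,
      ← Nat.cast_smul_eq_nsmul ℝ, smul_smul, inv_mul_cancel₀ (by positivity), one_smul]
  have hS_herm : ∀ ω, (S ω).IsHermitian := fun ω =>
    IsHermitian.smul (isSelfAdjoint_sum _ fun i _ => (hsymm i ω).sub hM_herm) (.all _)
  have hSL2 : ∀ k l, MemLp (fun ω => S ω k l) 2 μ := fun k l => by
    simpa only [S, Matrix.smul_apply, Matrix.sum_apply, smul_eq_mul] using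
      (memLp_finsetSum _ fun i _ => hDL2 i k l).const_mul (n : ℝ)⁻¹
  have hψ : Measurable fun x : Fin n → Matrix (Fin d) (Fin d) ℝ => (n : ℝ)⁻¹ • ∑ i, (x i - M) :=
    (by fun_prop : Continuous _).measurable
  have hSU : IndepFun S U μ := hindep.comp hψ measurable_id
  have hvar : LoewnerLE (matExpect μ fun ω => S ω * S ω) ((n : ℝ)⁻¹ • V) := by
    simpa only [Fintype.card_fin] using loewnerLE_matExpect_mean_mul_mean hDL2 hV hcross
  simp_rw [hS]
  calc _ ≤ ENNReal.ofReal ((matExpect μ (fun ω => S ω * S ω) * (A⁻¹ * A⁻¹)).trace) :=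
        hU.measure_not_loewnerLE_matAbs_le hS_herm hSL2 hSU hA
    _ ≤ ENNReal.ofReal (((n : ℝ)⁻¹ • V * (A⁻¹ * A⁻¹)).trace) :=
        ENNReal.ofReal_le_ofReal (hvar.trace_mul_le hA.posSemidef_inv_mul_inv)
    _ = ENNReal.ofReal ((V * (A⁻¹ * A⁻¹)).trace / n) := by
        rw [smul_mul, trace_smul, smul_eq_mul, inv_mul_eq_div]

/-- **Uniformly randomized n-matrix Chebyshev inequality.**
Under common mean `M`, variance bounds `V`, vanishing expected anticommutators, a trace
super-uniform random PSD matrix `U` independent of the data, and `A ≻ 0`: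
`P( abs(X̄ₙ - M) ⋠ (A U A)^{1/2} ) ≤ n⁻¹ tr(V A⁻²)`. -/
theorem stmt3 {Ω : Type*} {m0 : MeasurableSpace Ω} (μ : Measure Ω) [IsProbabilityMeasure μ]
    {d n : ℕ} (hn : 0 < n)
    (X : Fin n → Ω → Matrix (Fin d) (Fin d) ℝ) (U : Ω → Matrix (Fin d) (Fin d) ℝ)
    (hsymm : ∀ i ω, (X i ω).IsHermitian)
    (hL2 : ∀ i k l, MemLp (fun ω => X i ω k l) 2 μ)
    (M V : Matrix (Fin d) (Fin d) ℝ)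
    (hM : ∀ i, matExpect μ (X i) = M)
    (hV : ∀ i, LoewnerLE (matExpect μ (fun ω => (X i ω - M) * (X i ω - M))) V)
    (hcross : ∀ i j, i ≠ j →
      matExpect μ (fun ω => (X i ω - M) * (X j ω - M) + (X j ω - M) * (X i ω - M)) = 0)
    (hUpsd : ∀ ω, (U ω).PosSemidef)
    (hU : TraceSuperUniform μ U)
    (hindep : IndepFun (fun ω (i : Fin n) => X i ω) U μ)
    (A : Matrix (Fin d) (Fin d) ℝ) (hA : A.PosDef) :
    μ {ω | ¬ LoewnerLE (matAbs ((n : ℝ)⁻¹ • ∑ i, X i ω - M)) (matSqrt (A * U ω * A))} ≤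
      ENNReal.ofReal ((V * (A⁻¹ * A⁻¹)).trace / n) :=
  stmt3_general (m0 := m0) μ hn X U hsymm hL2 M V hM hV hcross hU hindep A hA

end
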